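/- Under the combining setup with ψ of Stouffer type, assume there exists r0 ∈ {1,…,r−1} such that: (a) the random vector (T_{n,1},…,T_{n,r0}) converges in distribution to an R^{r0}-valued random vector with continuous c.d.f., and sup_{x ∈ R^{r0}} | Q_n(X_n, x) − P(T_{n,1} ≤ x_1, …, T_{n,r0} ≤ x_{r0}) | converges to 0 in probability, where Q_n(y, x) = ν_n({v ∈ 𝒱_n : (g_n(y,v))_j ≤ x_j for all j = 1,…,r0}) is a version of the conditional c.d.f. of (T_{n,1}^{[1]},…,T_{n,r0}^{[1]}) given X_n = y; and (b) for every j ∈ {r0+1,…,r}, P(T_{n,j}^{[1]} ≥ T_{n,j}) → 0 as n → ∞. Then W_{n,M_n}^{[0]} diverges to +∞ in probability, i.e., for every real C, P(W_{n,M_n}^{[0]} ≤ C) → 0 as n → ∞. -/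

import Mathlib

/-!
For a coordinate `j ≥ r0` the approximate p-value has mean about
`P(T_{n,j}^{[1]} ≥ T_{n,j}) → 0`, so by Markov's inequality it tends to `0` in probability and
`φ` of it diverges to `+∞`. For a null coordinate, conditionally on the data the indicators
`1(T_{n,j}^{[l]} ≥ T_{n,j})` are i.i.d. Bernoulli with parameter `s_n`, the conditional
probability that a replicate exceeds the statistic; the centred indicators are therefore
orthogonal and Chebyshev's inequality keeps the p-value close to `s_n`. Uniform consistency of
the conditional c.d.f., together with the continuity of the limit law, keeps `s_n` away from `1`
with high probability, so `φ` of the p-value is bounded below in probability. A sum of positive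
multiples of terms bounded below in probability, one of which diverges, diverges.
-/

open MeasureTheory ProbabilityTheory Filter Topology

/-- Convergence in distribution of a sequence of random elements `A n : Ω → E` under `P`
towards a Borel law `μ` on `E`: for every bounded continuous `f : E → ℝ`,
`∫ f(A_n) dP → ∫ f dμ`. -/
def TendstoInDistribution {Ω E : Type*} [MeasurableSpace Ω] [MeasurableSpace E]
    [TopologicalSpace E] (P : Measure Ω) (A : ℕ → Ω → E) (μ : Measure E) : Prop :=
  ∀ f : BoundedContinuousFunction E ℝ,
    Tendsto (fun n => ∫ ω, f (A n ω) ∂P) atTop (𝓝 (∫ x, f x ∂μ))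

open Set Function

section InProbability

variable {Ω : Type*} [MeasurableSpace Ω]

def TendstoAtTopInProb (P : Measure Ω) (Y : ℕ → Ω → ℝ) : Prop :=
  ∀ C : ℝ, Tendsto (fun n => P {ω | Y n ω ≤ C}) atTop (𝓝 0)

def BddBelowInProb (P : Measure Ω) (Y : ℕ → Ω → ℝ) : Prop :=
  ∀ ε > 0, ∃ L : ℝ, ∀ᶠ n in atTop, P {ω | Y n ω ≤ L} ≤ ε

def BddAwayFromOneInProb (P : Measure Ω) (Y : ℕ → Ω → ℝ) : Prop :=
  ∀ ε > 0, ∃ β < 1, ∀ᶠ n in atTop, P {ω | β ≤ Y n ω} ≤ ε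

variable {P : Measure Ω} {Y Z : ℕ → Ω → ℝ}

theorem BddBelowInProb.add (hY : BddBelowInProb P Y) (hZ : BddBelowInProb P Z) :
    BddBelowInProb P (Y + Z) := by
  intro ε hε
  obtain ⟨L, hL⟩ := hY (ε / 2) (ENNReal.half_pos hε.ne')
  obtain ⟨L', hL'⟩ := hZ (ε / 2) (ENNReal.half_pos hε.ne')
  refine ⟨L + L', ?_⟩
  filter_upwards [hL, hL'] with n hn hn'
  calc P {ω | (Y + Z) n ω ≤ L + L'}
      ≤ P ({ω | Y n ω ≤ L} ∪ {ω | Z n ω ≤ L'}) := by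
        refine measure_mono fun ω hω => ?_
        by_contra h
        simp only [mem_union, mem_ofPred_eq, not_or, not_le, Pi.add_apply] at h hω
        linarith
    _ ≤ ε / 2 + ε / 2 := (measure_union_le _ _).trans (add_le_add hn hn')
    _ = ε := ENNReal.add_halves ε

theorem bddBelowInProb_sum {ι : Type*} {s : Finset ι} {Y : ι → ℕ → Ω → ℝ}
    (h : ∀ i ∈ s, BddBelowInProb P (Y i)) : BddBelowInProb P (∑ i ∈ s, Y i) := by
  classical
  induction s using Finset.induction_on with
  | empty => exact fun ε _ => ⟨-1, .of_forall fun n => by norm_num⟩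
  | insert i s hi ih =>
    rw [Finset.sum_insert hi]
    exact (h i (s.mem_insert_self i)).add (ih fun k hk => h k (Finset.mem_insert_of_mem hk))

theorem TendstoAtTopInProb.add_bddBelowInProb (hY : TendstoAtTopInProb P Y)
    (hZ : BddBelowInProb P Z) : TendstoAtTopInProb P (Y + Z) := by
  intro C
  rw [ENNReal.tendsto_nhds_zero]
  intro ε hε
  obtain ⟨L, hL⟩ := hZ (ε / 2) (ENNReal.half_pos hε.ne')
  filter_upwards [hL, ENNReal.tendsto_nhds_zero.1 (hY (C - L)) (ε / 2)
    (ENNReal.half_pos hε.ne')] with n hn hn'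
  calc P {ω | (Y + Z) n ω ≤ C}
      ≤ P ({ω | Y n ω ≤ C - L} ∪ {ω | Z n ω ≤ L}) := by
        refine measure_mono fun ω hω => ?_
        by_contra h
        simp only [mem_union, mem_ofPred_eq, not_or, not_le, Pi.add_apply] at h hω
        linarith
    _ ≤ ε / 2 + ε / 2 := (measure_union_le _ _).trans (add_le_add hn' hn)
    _ = ε := ENNReal.add_halves ε

variable {p : ℕ → Ω → ℝ} {φ : ℝ → ℝ} {w : ℝ}

theorem bddAwayFromOneInProb_of_tendsto
    (hp : ∀ q > 0, Tendsto (fun n => P {ω | q ≤ p n ω}) atTop (𝓝 0)) :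
    BddAwayFromOneInProb P p :=
  fun ε hε => ⟨1 / 2, by norm_num, ENNReal.tendsto_nhds_zero.1 (hp _ (by norm_num)) ε hε⟩

theorem BddAwayFromOneInProb.bddBelowInProb_mul_comp (hp : BddAwayFromOneInProb P p)
    (hp01 : ∀ n ω, p n ω ∈ Ioo 0 1) (hφ : StrictAntiOn φ (Ioo 0 1)) (hw : 0 < w) :
    BddBelowInProb P (fun n ω => w * φ (p n ω)) := by
  intro ε hε
  obtain ⟨β, hβ1, hβ⟩ := hp ε hε
  -- raising the level to `1/2` only shrinks the event and puts it inside the domain of `φ`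
  set β' := max β (1 / 2)
  have hβ' : β' ∈ Ioo 0 1 := ⟨by positivity, max_lt hβ1 (by norm_num)⟩
  refine ⟨w * φ β', hβ.mono fun n hn => (measure_mono fun ω hω => ?_).trans hn⟩
  by_contra h
  have hlt : p n ω < β' := lt_of_lt_of_le (not_le.1 h) (le_max_left _ _)
  have := hφ (hp01 n ω) hβ' hlt
  simp only [mem_ofPred_eq] at hω
  nlinarith

theorem tendstoAtTopInProb_mul_comp
    (hp : ∀ q > 0, Tendsto (fun n => P {ω | q ≤ p n ω}) atTop (𝓝 0))
    (hp01 : ∀ n ω, p n ω ∈ Ioo 0 1) (hφ : StrictAntiOn φ (Ioo 0 1))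
    (hφs : SurjOn φ (Ioo 0 1) univ) (hw : 0 < w) :
    TendstoAtTopInProb P (fun n ω => w * φ (p n ω)) := by
  intro C
  obtain ⟨q, hq, hqC⟩ := hφs (mem_univ (C / w))
  refine tendsto_of_tendsto_of_tendsto_of_le_of_le tendsto_const_nhds (hp q hq.1)
    (fun _ => zero_le) fun n => measure_mono fun ω hω => ?_
  by_contra h
  have := hφ (hp01 n ω) hq (not_le.1 h)
  simp only [mem_ofPred_eq] at hω
  rw [hqC, div_lt_iff₀' hw] at this
  linarith

end InProbability

theorem tendstoAtTopInProb_sum_mul_comp {Ω ι : Type*} [MeasurableSpace Ω] [Fintype ι]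
    {P : Measure Ω} {p : ℕ → ι → Ω → ℝ} (hp01 : ∀ n i ω, p n i ω ∈ Ioo 0 1)
    {w : ι → ℝ} (hw : ∀ i, 0 < w i) {φ : ℝ → ℝ} (hφ : StrictAntiOn φ (Ioo 0 1))
    (hφs : SurjOn φ (Ioo 0 1) univ) (i₀ : ι)
    (h₀ : ∀ q > 0, Tendsto (fun n => P {ω | q ≤ p n i₀ ω}) atTop (𝓝 0))
    (hi : ∀ i, BddAwayFromOneInProb P (fun n => p n i)) :
    TendstoAtTopInProb P (fun n ω => ∑ i, w i * φ (p n i ω)) := by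
  classical
  have hsplit : (fun n ω => ∑ i, w i * φ (p n i ω)) = (fun n ω => w i₀ * φ (p n i₀ ω)) +
      ∑ i ∈ Finset.univ.erase i₀, fun n ω => w i * φ (p n i ω) := by
    ext n ω
    simp only [Pi.add_apply, Finset.sum_apply]
    exact (Finset.add_sum_erase _ _ (Finset.mem_univ i₀)).symm
  rw [hsplit]
  exact (tendstoAtTopInProb_mul_comp h₀ (hp01 · i₀) hφ hφs (hw i₀)).add_bddBelowInProb
    (bddBelowInProb_sum fun i _ => (hi i).bddBelowInProb_mul_comp (hp01 · i) hφ (hw i))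

theorem tendsto_measure_of_measureReal_le {Ω : Type*} [MeasurableSpace Ω] {P : Measure Ω}
    [IsFiniteMeasure P] {E : ℕ → Set Ω} {u : ℕ → ℝ} (hE : ∀ᶠ n in atTop, P.real (E n) ≤ u n)
    (hu : Tendsto u atTop (𝓝 0)) : Tendsto (fun n => P (E n)) atTop (𝓝 0) := by
  rw [← ENNReal.tendsto_toReal_iff (fun _ => measure_ne_top _ _) ENNReal.zero_ne_top]
  exact squeeze_zero' (.of_forall fun _ => measureReal_nonneg) hE hu

theorem integral_sq_sum_le_card {Ω ι : Type*} [MeasurableSpace Ω] {P : Measure Ω}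
    [IsProbabilityMeasure P] (t : Finset ι) {a : ι → Ω → ℝ}
    (ha : ∀ i, AEStronglyMeasurable (a i) P) (hbdd : ∀ i ω, |a i ω| ≤ 1)
    (horth : ∀ i ∈ t, ∀ k ∈ t, i ≠ k → ∫ ω, a i ω * a k ω ∂P = 0) :
    ∫ ω, (∑ i ∈ t, a i ω) ^ 2 ∂P ≤ t.card := by
  have hbdd2 : ∀ i k ω, |a i ω * a k ω| ≤ 1 := fun i k ω => by
    rw [abs_mul]; exact mul_le_one₀ (hbdd i ω) (abs_nonneg _) (hbdd k ω)
  have hint : ∀ i k, Integrable (fun ω => a i ω * a k ω) P := fun i k =>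
    .of_bound ((ha i).mul (ha k)) 1 (.of_forall (hbdd2 i k))
  calc ∫ ω, (∑ i ∈ t, a i ω) ^ 2 ∂P
      = ∑ i ∈ t, ∑ k ∈ t, ∫ ω, a i ω * a k ω ∂P := by
        simp_rw [sq, Finset.sum_mul_sum]
        rw [integral_finsetSum _ fun i _ => integrable_finsetSum _ fun k _ => hint i k]
        exact Finset.sum_congr rfl fun i _ => integral_finsetSum _ fun k _ => hint i k
    _ = ∑ i ∈ t, ∫ ω, a i ω * a i ω ∂P := Finset.sum_congr rfl fun i hi =>
        Finset.sum_eq_single i (fun k hk hki => horth i hi k hk (Ne.symm hki))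
          (absurd hi)
    _ ≤ ∑ _i ∈ t, (1 : ℝ) := Finset.sum_le_sum fun i _ =>
        (integral_mono (hint i i) (integrable_const 1)
          fun ω => (le_abs_self _).trans (hbdd2 i i ω)).trans_eq (by simp)
    _ = t.card := by simp

section ApproxPValue

variable {Ω : Type*}

noncomputable def approxPValue (M : ℕ) (S : ℕ → Set Ω) (ω : Ω) : ℝ :=
  1 / ((M : ℝ) + 1) * (1 / 2 + ∑ l ∈ Finset.Icc 1 M, (S l).indicator 1 ω)

theorem indicator_one_mem_Icc (S : Set Ω) (ω : Ω) : S.indicator (1 : Ω → ℝ) ω ∈ Icc 0 1 := by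
  by_cases h : ω ∈ S <;> simp [h]

theorem sum_indicator_one_mem_Icc (M : ℕ) (S : ℕ → Set Ω) (ω : Ω) :
    ∑ l ∈ Finset.Icc 1 M, (S l).indicator (1 : Ω → ℝ) ω ∈ Icc 0 (M : ℝ) := by
  refine ⟨Finset.sum_nonneg fun l _ => (indicator_one_mem_Icc _ _).1, ?_⟩
  simpa using Finset.sum_le_card_nsmul (Finset.Icc 1 M) _ _ fun l _ =>
    (indicator_one_mem_Icc (S l) ω).2

theorem approxPValue_mem_Ioo (M : ℕ) (S : ℕ → Set Ω) (ω : Ω) :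
    approxPValue M S ω ∈ Ioo 0 1 := by
  obtain ⟨h0, hN⟩ := sum_indicator_one_mem_Icc M S ω
  rw [approxPValue, one_div_mul_eq_div]
  constructor
  · positivity
  · rw [div_lt_one (by positivity)]; linarith

variable [MeasurableSpace Ω]

theorem measurable_approxPValue (M : ℕ) {S : ℕ → Set Ω} (hS : ∀ l, MeasurableSet (S l)) :
    Measurable (approxPValue M S) :=
  measurable_const.mul (measurable_const.add
    (Finset.measurable_sum _ fun l _ => measurable_const.indicator (hS l)))

variable {P : Measure Ω} [IsProbabilityMeasure P]

theorem integral_approxPValue (M : ℕ) {S : ℕ → Set Ω} (hS : ∀ l, MeasurableSet (S l)) :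
    ∫ ω, approxPValue M S ω ∂P =
      1 / ((M : ℝ) + 1) * (1 / 2 + ∑ l ∈ Finset.Icc 1 M, P.real (S l)) := by
  have hint : ∀ l, Integrable ((S l).indicator (1 : Ω → ℝ)) P := fun l =>
    (integrable_const 1).indicator (hS l)
  simp only [approxPValue]
  rw [integral_const_mul,
    integral_add (integrable_const _) (integrable_finsetSum _ fun l _ => hint l),
    integral_finsetSum _ fun l _ => hint l]
  simp [integral_indicator_one (hS _)]

theorem tendsto_measure_le_approxPValue {M : ℕ → ℕ} (hM : Tendsto M atTop atTop)
    {S : ℕ → ℕ → Set Ω} (hS : ∀ n l, MeasurableSet (S n l)) {c : ℕ → ℝ}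
    (hc : ∀ n, ∀ l ∈ Finset.Icc 1 (M n), P.real (S n l) = c n) (hc0 : Tendsto c atTop (𝓝 0))
    {q : ℝ} (hq : 0 < q) :
    Tendsto (fun n => P {ω | q ≤ approxPValue (M n) (S n) ω}) atTop (𝓝 0) := by
  set e : ℕ → ℝ := fun n => 1 / ((M n : ℝ) + 1) * (1 / 2 + M n * c n)
  have hmean : ∀ n, ∫ ω, approxPValue (M n) (S n) ω ∂P = e n := fun n => by
    rw [integral_approxPValue _ (hS n), Finset.sum_congr rfl (hc n)]
    simp [e]
  have he : Tendsto e atTop (𝓝 0) := by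
    have h1 : Tendsto (fun n => 1 / ((M n : ℝ) + 1)) atTop (𝓝 0) :=
      (tendsto_one_div_add_atTop_nhds_zero_nat).comp hM
    have h2 : Tendsto (fun n => (M n : ℝ) / (M n + 1)) atTop (𝓝 1) :=
      (tendsto_natCast_div_add_atTop (1 : ℝ)).comp hM
    have := (h1.const_mul (1 / 2)).add (h2.mul hc0)
    simp only [mul_zero, add_zero] at this
    refine this.congr fun n => ?_
    simp only [e]
    ring
  refine tendsto_measure_of_measureReal_le (.of_forall fun n => ?_) (by simpa using he.div_const q)
  rw [le_div_iff₀' hq, ← hmean]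
  exact mul_meas_ge_le_integral_of_nonneg (.of_forall fun ω => (approxPValue_mem_Ioo _ _ ω).1.le)
    (.of_bound (measurable_approxPValue _ (hS n)).aestronglyMeasurable 1 (.of_forall fun ω => by
      obtain ⟨h0, h1⟩ := approxPValue_mem_Ioo (M n) (S n) ω
      rw [Real.norm_eq_abs, abs_of_pos h0]
      exact h1.le)) q

end ApproxPValue

section Concentration

variable {Ω : Type*} [MeasurableSpace Ω] {P : Measure Ω} [IsProbabilityMeasure P]

theorem measureReal_le_approxPValue_inter_lt_le {M : ℕ} (hM : 0 < M) {S : ℕ → Set Ω}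
    (hS : ∀ l, MeasurableSet (S l)) {s : Ω → ℝ} (hs : Measurable s) (hs01 : ∀ ω, s ω ∈ Icc 0 1)
    (horth : ∀ l ∈ Finset.Icc 1 M, ∀ k ∈ Finset.Icc 1 M, l ≠ k →
      ∫ ω, ((S l).indicator 1 ω - s ω) * ((S k).indicator 1 ω - s ω) ∂P = 0)
    {β σ : ℝ} (hσβ : σ < β) (hβ : 1 / 2 ≤ β) :
    P.real ({ω | β ≤ approxPValue M S ω} ∩ {ω | s ω < σ}) ≤ 1 / ((β - σ) ^ 2 * M) := by
  set N : Ω → ℝ := fun ω => ∑ l ∈ Finset.Icc 1 M, (S l).indicator 1 ω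
  set D : Ω → ℝ := fun ω => ∑ l ∈ Finset.Icc 1 M, ((S l).indicator 1 ω - s ω)
  have hD : ∀ ω, D ω = N ω - M * s ω := fun ω => by simp [D, N, Finset.sum_sub_distrib]
  have hM' : (0 : ℝ) < M := Nat.cast_pos.2 hM
  have hβσ : 0 < β - σ := sub_pos.2 hσβ
  set t := ((β - σ) * M) ^ 2
  have hsub : {ω | β ≤ approxPValue M S ω} ∩ {ω | s ω < σ} ⊆ {ω | t ≤ D ω ^ 2} := by
    rintro ω ⟨hp, hsσ⟩
    simp only [mem_ofPred_eq, approxPValue, one_div_mul_eq_div] at hp hsσ ⊢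
    rw [le_div_iff₀ (by positivity)] at hp
    -- `1 / 2 ≤ β` absorbs the offset `1 / 2`, so `β ≤ p` forces at least `β M` exceedances
    have : (β - σ) * M ≤ D ω := by rw [hD]; nlinarith
    exact pow_le_pow_left₀ (by positivity) this 2
  have hDbdd : ∀ ω, D ω ^ 2 ≤ (M : ℝ) ^ 2 := fun ω => by
    obtain ⟨hN0, hNM⟩ := sum_indicator_one_mem_Icc M S ω
    obtain ⟨hs0, hs1⟩ := hs01 ω
    rw [hD, sq_le_sq, abs_of_pos hM']
    exact abs_le.2 ⟨by nlinarith, by nlinarith⟩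
  have hDm : Measurable D :=
    Finset.measurable_sum _ fun l _ => (measurable_const.indicator (hS l)).sub hs
  have hDint : Integrable (fun ω => D ω ^ 2) P :=
    .of_bound (hDm.pow_const 2).aestronglyMeasurable _
      (.of_forall fun ω => by rw [Real.norm_of_nonneg (sq_nonneg _)]; exact hDbdd ω)
  have hD2 : ∫ ω, D ω ^ 2 ∂P ≤ M := by
    refine (integral_sq_sum_le_card (Finset.Icc 1 M)
      (a := fun l ω => (S l).indicator 1 ω - s ω)
      (fun l => ((measurable_const.indicator (hS l)).sub hs).aestronglyMeasurable)
      (fun l ω => by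
        obtain ⟨h0, h1⟩ := indicator_one_mem_Icc (S l) ω
        obtain ⟨hs0, hs1⟩ := hs01 ω
        exact abs_le.2 ⟨by linarith, by linarith⟩) horth).trans_eq ?_
    simp
  calc P.real ({ω | β ≤ approxPValue M S ω} ∩ {ω | s ω < σ})
      ≤ P.real {ω | t ≤ D ω ^ 2} := measureReal_mono hsub
    _ ≤ (∫ ω, D ω ^ 2 ∂P) / t := by
        rw [le_div_iff₀' (by positivity)]
        exact mul_meas_ge_le_integral_of_nonneg (.of_forall fun ω => sq_nonneg _) hDint t
    _ ≤ M / t := by gcongr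
    _ = 1 / ((β - σ) ^ 2 * M) := by simp only [t]; field_simp

theorem bddAwayFromOneInProb_approxPValue {M : ℕ → ℕ} (hM : Tendsto M atTop atTop)
    {S : ℕ → ℕ → Set Ω} (hS : ∀ n l, MeasurableSet (S n l)) {s : ℕ → Ω → ℝ}
    (hsm : ∀ n, Measurable (s n)) (hs01 : ∀ n ω, s n ω ∈ Icc 0 1)
    (horth : ∀ n, ∀ l ∈ Finset.Icc 1 (M n), ∀ k ∈ Finset.Icc 1 (M n), l ≠ k →
      ∫ ω, ((S n l).indicator 1 ω - s n ω) * ((S n k).indicator 1 ω - s n ω) ∂P = 0)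
    (hs : BddAwayFromOneInProb P s) :
    BddAwayFromOneInProb P (fun n => approxPValue (M n) (S n)) := by
  intro ε hε
  obtain ⟨σ, hσ1, hσ⟩ := hs (ε / 2) (ENNReal.half_pos hε.ne')
  set β := max ((1 + σ) / 2) (1 / 2)
  have hσβ : σ < β := lt_max_of_lt_left (by linarith)
  refine ⟨β, max_lt (by linarith) (by norm_num), ?_⟩
  have hcheb : Tendsto (fun n => P ({ω | β ≤ approxPValue (M n) (S n) ω} ∩ {ω | s n ω < σ}))
      atTop (𝓝 0) := by
    refine tendsto_measure_of_measureReal_le ((hM.eventually_ge_atTop 1).mono fun n hn =>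
      measureReal_le_approxPValue_inter_lt_le hn (hS n) (hsm n) (hs01 n) (horth n) hσβ
        (le_max_right _ _)) ?_
    exact ((tendsto_natCast_atTop_atTop.comp hM).const_mul_atTop
      (pow_pos (sub_pos.2 hσβ) 2)).inv_tendsto_atTop.congr fun n => by simp [one_div]
  filter_upwards [hσ, ENNReal.tendsto_nhds_zero.1 hcheb (ε / 2) (ENNReal.half_pos hε.ne')]
    with n hn hn'
  calc P {ω | β ≤ approxPValue (M n) (S n) ω}
      ≤ P (({ω | β ≤ approxPValue (M n) (S n) ω} ∩ {ω | s n ω < σ}) ∪ {ω | σ ≤ s n ω}) :=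
        measure_mono fun ω hω => (lt_or_ge (s n ω) σ).imp (fun h => ⟨hω, h⟩) id
    _ ≤ ε / 2 + ε / 2 := (measure_union_le _ _).trans (add_le_add hn' hn)
    _ = ε := ENNReal.add_halves ε

end Concentration

theorem bddAwayFromOneInProb_of_tendsto_cdf {Ω : Type*} [MeasurableSpace Ω] {P : Measure Ω}
    [IsFiniteMeasure P] {T : ℕ → Ω → ℝ} {μ : Measure ℝ} [IsProbabilityMeasure μ]
    (hμ : Continuous (cdf μ))
    (hT : ∀ u, Tendsto (fun n => P.real {ω | T n ω ≤ u}) atTop (𝓝 (cdf μ u)))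
    {s D : ℕ → Ω → ℝ} {Q : ℕ → Ω → ℝ → ℝ} (hsQ : ∀ n ω u, u < T n ω → s n ω ≤ 1 - Q n ω u)
    (hQ : ∀ n ω u, P.real {ω' | T n ω' ≤ u} - Q n ω u ≤ D n ω)
    (hD : ∀ η > 0, Tendsto (fun n => P {ω | η ≤ D n ω}) atTop (𝓝 0)) :
    BddAwayFromOneInProb P s := by
  intro ε hε
  obtain ⟨r, -, hr0, hrε⟩ := ENNReal.lt_iff_exists_real_btwn.1 hε
  rw [ENNReal.ofReal_pos] at hr0
  set c := min r 1 / 4 with hc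
  have hc0 : 0 < c := by positivity
  have hc1 : c < 1 := by linarith [min_le_right r 1]
  have hcr : 4 * c ≤ r := by linarith [min_le_left r 1]
  obtain ⟨a, ha⟩ : c ∈ range (cdf μ) := mem_range_of_exists_le_of_exists_ge hμ
    ((tendsto_cdf_atBot μ).eventually (ge_mem_nhds hc0)).exists
    ((tendsto_cdf_atTop μ).eventually (le_mem_nhds hc1)).exists
  have hlow : ∀ᶠ n in atTop, c / 2 < P.real {ω | T n ω ≤ a} :=
    (hT a).eventually (lt_mem_nhds (by linarith))
  have hupp : ∀ᶠ n in atTop, P.real {ω | T n ω ≤ a} ≤ 2 * c :=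
    (hT a).eventually (ge_mem_nhds (by linarith))
  have hDev : ∀ᶠ n in atTop, P {ω | c / 4 ≤ D n ω} ≤ ENNReal.ofReal (2 * c) :=
    ENNReal.tendsto_nhds_zero.1 (hD _ (by positivity)) _ (by simpa using hc0)
  -- where `a < T n`, the conditional mass `Q n ω a ≈ c` lies below the statistic,
  -- so `s ≤ 1 - c / 2 + D`
  refine ⟨1 - c / 4, by linarith, ?_⟩
  filter_upwards [hlow, hupp, hDev] with n hlow hupp hDev
  calc P {ω | 1 - c / 4 ≤ s n ω}
      ≤ P ({ω | T n ω ≤ a} ∪ {ω | c / 4 ≤ D n ω}) := measure_mono fun ω hω => by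
        by_contra h
        simp only [mem_union, mem_ofPred_eq, not_or, not_le] at h hω
        linarith [hsQ n ω a h.1, hQ n ω a]
    _ ≤ ENNReal.ofReal (2 * c) + ENNReal.ofReal (2 * c) :=
        (measure_union_le _ _).trans (add_le_add
          ((ENNReal.le_ofReal_iff_toReal_le (measure_ne_top _ _) (by positivity)).2 hupp) hDev)
    _ ≤ ε := by
        rw [← ENNReal.ofReal_add (by positivity) (by positivity)]
        exact (ENNReal.ofReal_le_ofReal (by linarith)).trans hrε.le

section LimitLaw

theorem measure_eval_eq_zero_of_continuous_cdf {ι : Type*} [Fintype ι] [DecidableEq ι]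
    {μ : Measure (ι → ℝ)} [IsFiniteMeasure μ] (hμ : Continuous fun x => μ.real (Iic x))
    (j : ι) (t : ℝ) : μ {y | y j = t} = 0 := by
  -- the slice lies between the orthants at `update c j (t - 1 / (k + 1))` and `update c j t`,
  -- whose masses merge as `k → ∞` by continuity of the c.d.f.
  have hslice : ∀ c : ι → ℝ, μ ({y | y j = t} ∩ Iic (update c j t)) = 0 := by
    intro c
    have hx : Continuous fun s : ℝ => update c j s := continuous_const.update j continuous_id
    have hlim : Tendsto (fun k : ℕ => μ.real (Iic (update c j t)) -
        μ.real (Iic (update c j (t - 1 / (k + 1))))) atTop (𝓝 0) := by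
      have h1 : Tendsto (fun k : ℕ => t - 1 / ((k : ℝ) + 1)) atTop (𝓝 t) := by
        simpa using (tendsto_const_nhds (x := t)).sub
          (tendsto_one_div_add_atTop_nhds_zero_nat (𝕜 := ℝ))
      simpa using (tendsto_const_nhds (x := μ.real (Iic (update c j t)))).sub
        (((hμ.comp hx).tendsto t).comp h1)
    refine (measureReal_eq_zero_iff).1 (le_antisymm (ge_of_tendsto' hlim fun k => ?_)
      measureReal_nonneg)
    have hk : 0 < 1 / ((k : ℝ) + 1) := by positivity
    have hsub : Iic (update c j (t - 1 / (k + 1))) ⊆ Iic (update c j t) :=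
      Iic_subset_Iic.2 (update_le_update_iff'.2 (by linarith))
    rw [← measureReal_sdiff hsub measurableSet_Iic]
    refine measureReal_mono fun y ⟨hyj, hy⟩ => ⟨hy, fun h => ?_⟩
    have := (le_update_iff.1 h).1
    simp only [mem_ofPred_eq] at hyj
    linarith
  refine measure_mono_null (fun y hy => mem_iUnion.2 ?_)
    (measure_iUnion_null fun m : ℕ => hslice fun _ => m)
  obtain ⟨m, hm⟩ := exists_nat_ge ‖y‖
  exact ⟨m, hy, le_update_iff.2 ⟨le_of_eq hy, fun k _ =>
    (le_abs_self _).trans ((norm_le_pi_norm y k).trans hm)⟩⟩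

theorem continuous_cdf_of_measure_singleton {μ : Measure ℝ} [IsProbabilityMeasure μ]
    (hμ : ∀ t, μ {t} = 0) : Continuous (cdf μ) := by
  refine continuous_iff_continuousAt.2 fun t => ?_
  rw [(monotone_cdf μ).continuousAt_iff_leftLim_eq_rightLim, StieltjesFunction.rightLim_eq]
  have h := (cdf μ).measure_singleton t
  rw [measure_cdf, hμ t, eq_comm, ENNReal.ofReal_eq_zero] at h
  linarith [(monotone_cdf μ).leftLim_le (le_refl t)]

theorem TendstoInDistribution.comp_continuous {Ω E F : Type*} [MeasurableSpace Ω]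
    [MeasurableSpace E] [TopologicalSpace E] [OpensMeasurableSpace E] [MeasurableSpace F]
    [TopologicalSpace F] [BorelSpace F] [TopologicalSpace.PseudoMetrizableSpace F]
    {P : Measure Ω} {A : ℕ → Ω → E} {μ : Measure E} (h : TendstoInDistribution P A μ)
    {g : E → F} (hg : Continuous g) : TendstoInDistribution P (fun n ω => g (A n ω)) (μ.map g) := by
  intro f
  rw [integral_map hg.measurable.aemeasurable f.continuous.aestronglyMeasurable]
  exact h (f.compContinuous ⟨g, hg⟩)

theorem TendstoInDistribution.tendsto_measureReal_le {Ω : Type*} [MeasurableSpace Ω]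
    {P : Measure Ω} [IsProbabilityMeasure P] {Z : ℕ → Ω → ℝ} (hZ : ∀ n, Measurable (Z n))
    {μ : Measure ℝ} [IsProbabilityMeasure μ] (h : TendstoInDistribution P Z μ) {u : ℝ}
    (hu : μ {u} = 0) : Tendsto (fun n => P.real {ω | Z n ω ≤ u}) atTop (𝓝 (cdf μ u)) := by
  set μs : ℕ → ProbabilityMeasure ℝ := fun n =>
    ⟨P.map (Z n), Measure.isProbabilityMeasure_map (hZ n).aemeasurable⟩
  set μ' : ProbabilityMeasure ℝ := ⟨μ, inferInstance⟩
  have hlim : Tendsto μs atTop (𝓝 μ') := by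
    rw [ProbabilityMeasure.tendsto_iff_forall_integral_tendsto]
    intro f
    simpa [μs, μ', integral_map (hZ _).aemeasurable f.continuous.aestronglyMeasurable] using h f
  have := ProbabilityMeasure.tendsto_measure_of_null_frontier_of_tendsto' hlim (E := Iic u)
    (by simpa [μ', frontier_Iic] using hu)
  rw [cdf_eq_real]
  refine ((ENNReal.tendsto_toReal (measure_ne_top μ _)).comp this).congr fun n => ?_
  simp only [μs, ProbabilityMeasure.coe_mk, Function.comp_apply]
  rw [Measure.map_apply (hZ n) measurableSet_Iic]
  rfl

end LimitLaw

section Marginal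

variable {α β ι : Type*} [MeasurableSpace α] [MeasurableSpace β] [Fintype ι] [DecidableEq ι]

theorem tendsto_measureReal_forall_le_update (μ : Measure α) [IsFiniteMeasure μ]
    (G : α → ι → ℝ) (j : ι) (u : ℝ) :
    Tendsto (fun m : ℕ => μ.real {a | ∀ k, G a k ≤ update (fun _ => (m : ℝ)) j u k}) atTop
      (𝓝 (μ.real {a | G a j ≤ u})) := by
  have hmono : Monotone fun m : ℕ => {a | ∀ k, G a k ≤ update (fun _ => (m : ℝ)) j u k} :=
    fun m m' hmm a ha k =>
      (ha k).trans (update_le_update_iff.2 ⟨le_rfl, fun _ _ => Nat.cast_le.2 hmm⟩ k)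
  have hunion : (⋃ m : ℕ, {a | ∀ k, G a k ≤ update (fun _ => (m : ℝ)) j u k}) =
      {a | G a j ≤ u} := by
    ext a
    simp only [mem_iUnion, mem_ofPred_eq]
    refine ⟨fun ⟨m, hm⟩ => by simpa using hm j, fun ha => ?_⟩
    obtain ⟨m, hm⟩ := exists_nat_ge ‖G a‖
    exact ⟨m, le_update_iff.2 ⟨ha, fun k _ =>
      (le_abs_self _).trans ((norm_le_pi_norm (G a) k).trans hm)⟩⟩
  have := tendsto_measure_iUnion_atTop (μ := μ) hmono
  rw [hunion] at this
  exact (ENNReal.tendsto_toReal (measure_ne_top μ _)).comp this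

theorem abs_sub_measureReal_le_iSup (μ : Measure α) (ν : Measure β) [IsFiniteMeasure μ]
    [IsFiniteMeasure ν] (G : α → ι → ℝ) (H : β → ι → ℝ) (j : ι) (u : ℝ) :
    |μ.real {a | G a j ≤ u} - ν.real {b | H b j ≤ u}| ≤
      ⨆ x : ι → ℝ, |μ.real {a | ∀ k, G a k ≤ x k} - ν.real {b | ∀ k, H b k ≤ x k}| := by
  have hbdd : BddAbove (range fun x : ι → ℝ =>
      |μ.real {a | ∀ k, G a k ≤ x k} - ν.real {b | ∀ k, H b k ≤ x k}|) := by
    refine ⟨μ.real univ + ν.real univ, forall_mem_range.2 fun x => abs_sub_le_iff.2 ⟨?_, ?_⟩⟩ <;>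
    linarith [measureReal_mono (μ := μ) (subset_univ {a | ∀ k, G a k ≤ x k}),
      measureReal_mono (μ := ν) (subset_univ {b | ∀ k, H b k ≤ x k}),
      measureReal_nonneg (μ := μ) (s := {a | ∀ k, G a k ≤ x k}),
      measureReal_nonneg (μ := ν) (s := {b | ∀ k, H b k ≤ x k})]
  exact le_of_tendsto' ((tendsto_measureReal_forall_le_update μ G j u).sub
    (tendsto_measureReal_forall_le_update ν H j u)).abs fun m => le_ciSup hbdd _

end Marginal

section Bootstrap

variable {Ω 𝒳 𝒱 : Type*} [MeasurableSpace Ω] [MeasurableSpace 𝒳] [MeasurableSpace 𝒱]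
  {P : Measure Ω} [IsProbabilityMeasure P] {X : Ω → 𝒳} {V : ℕ → Ω → 𝒱} {ν : Measure 𝒱}

theorem map_prodMk_eq_prod (hX : Measurable X) (hV : ∀ i, Measurable (V i))
    (hVlaw : ∀ i, 1 ≤ i → P.map (V i) = ν) (hVX : IndepFun X (fun ω (i : ℕ) => V (i + 1) ω) P)
    {l : ℕ} (hl : 1 ≤ l) : P.map (fun ω => (X ω, V l ω)) = (P.map X).prod ν := by
  obtain ⟨l, rfl⟩ := Nat.exists_eq_add_of_le' hl
  rw [(indepFun_iff_map_prod_eq_prod_map_map hX.aemeasurable (hV _).aemeasurable).1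
    (hVX.comp measurable_id (measurable_pi_apply l)), hVlaw _ hl]

theorem map_prodMk_prodMk_eq_prod (hX : Measurable X) (hV : ∀ i, Measurable (V i))
    (hVlaw : ∀ i, 1 ≤ i → P.map (V i) = ν) (hViid : iIndepFun (fun i => V (i + 1)) P)
    (hVX : IndepFun X (fun ω (i : ℕ) => V (i + 1) ω) P) {l k : ℕ} (hl : 1 ≤ l) (hk : 1 ≤ k)
    (hlk : l ≠ k) : P.map (fun ω => (X ω, V l ω, V k ω)) = (P.map X).prod (ν.prod ν) := by
  obtain ⟨l, rfl⟩ := Nat.exists_eq_add_of_le' hl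
  obtain ⟨k, rfl⟩ := Nat.exists_eq_add_of_le' hk
  have hVV : P.map (fun ω => (V (l + 1) ω, V (k + 1) ω)) = ν.prod ν := by
    rw [(indepFun_iff_map_prod_eq_prod_map_map (hV _).aemeasurable (hV _).aemeasurable).1
      (hViid.indepFun (by omega)), hVlaw _ hl, hVlaw _ hk]
  rw [(indepFun_iff_map_prod_eq_prod_map_map hX.aemeasurable
    ((hV _).prodMk (hV _)).aemeasurable).1
    (hVX.comp measurable_id ((measurable_pi_apply l).prodMk (measurable_pi_apply k))), hVV]

variable [IsProbabilityMeasure ν]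

theorem integral_mul_eq_zero_of_map_eq_prod (hX : Measurable X) {V₁ V₂ : Ω → 𝒱}
    (hV₁ : Measurable V₁) (hV₂ : Measurable V₂)
    (hmap : P.map (fun ω => (X ω, V₁ ω, V₂ ω)) = (P.map X).prod (ν.prod ν))
    {F₁ F₂ : 𝒳 × 𝒱 → ℝ} (hF₁ : Measurable F₁) (hF₂ : Measurable F₂) {C₁ C₂ : ℝ}
    (hF₁C : ∀ z, ‖F₁ z‖ ≤ C₁) (hF₂C : ∀ z, ‖F₂ z‖ ≤ C₂) (hcenter : ∀ x, ∫ v, F₁ (x, v) ∂ν = 0) :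
    ∫ ω, F₁ (X ω, V₁ ω) * F₂ (X ω, V₂ ω) ∂P = 0 := by
  set h : 𝒳 × 𝒱 × 𝒱 → ℝ := fun z => F₁ (z.1, z.2.1) * F₂ (z.1, z.2.2)
  have hh : Measurable h :=
    (hF₁.comp (measurable_fst.prodMk (measurable_fst.comp measurable_snd))).mul
      (hF₂.comp (measurable_fst.prodMk (measurable_snd.comp measurable_snd)))
  have hτ : Measurable fun ω => (X ω, V₁ ω, V₂ ω) := hX.prodMk (hV₁.prodMk hV₂)
  have := Measure.isProbabilityMeasure_map (μ := P) hX.aemeasurable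
  calc ∫ ω, F₁ (X ω, V₁ ω) * F₂ (X ω, V₂ ω) ∂P
      = ∫ z, h z ∂((P.map X).prod (ν.prod ν)) := by
        rw [← hmap, integral_map hτ.aemeasurable hh.aestronglyMeasurable]
    _ = ∫ x, ∫ vv, h (x, vv) ∂(ν.prod ν) ∂(P.map X) :=
        integral_prod _ (.of_bound hh.aestronglyMeasurable (C₁ * C₂)
          (.of_forall fun z => norm_mul_le_of_le (hF₁C _) (hF₂C _)))
    _ = 0 := integral_eq_zero_of_ae (.of_forall fun x => by
        simp only [h]
        rw [integral_prod_mul (fun v => F₁ (x, v)) (fun v => F₂ (x, v)), hcenter x, zero_mul]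
        rfl)

theorem integral_indicator_sub_mul_eq_zero (hX : Measurable X) {V₁ V₂ : Ω → 𝒱}
    (hV₁ : Measurable V₁) (hV₂ : Measurable V₂)
    (hmap : P.map (fun ω => (X ω, V₁ ω, V₂ ω)) = (P.map X).prod (ν.prod ν))
    {A : Set (𝒳 × 𝒱)} (hA : MeasurableSet A) :
    ∫ ω, (A.indicator 1 (X ω, V₁ ω) - ν.real (Prod.mk (X ω) ⁻¹' A)) *
      (A.indicator 1 (X ω, V₂ ω) - ν.real (Prod.mk (X ω) ⁻¹' A)) ∂P = 0 := by
  set F : 𝒳 × 𝒱 → ℝ := fun z => A.indicator 1 z - ν.real (Prod.mk z.1 ⁻¹' A)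
  have hF : Measurable F := (measurable_const.indicator hA).sub
    ((measurable_measure_prodMk_left hA).ennreal_toReal.comp measurable_fst)
  have hFC : ∀ z, ‖F z‖ ≤ 1 := fun z => by
    obtain ⟨h0, h1⟩ := indicator_one_mem_Icc A z
    rw [Real.norm_eq_abs, abs_le]
    exact ⟨by linarith [measureReal_le_one (μ := ν) (s := Prod.mk z.1 ⁻¹' A)],
      by linarith [measureReal_nonneg (μ := ν) (s := Prod.mk z.1 ⁻¹' A)]⟩
  refine integral_mul_eq_zero_of_map_eq_prod hX hV₁ hV₂ hmap hF hF hFC hFC fun x => ?_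
  have hAx : MeasurableSet (Prod.mk x ⁻¹' A) := measurable_prodMk_left hA
  change ∫ v, ((Prod.mk x ⁻¹' A).indicator 1 v - ν.real (Prod.mk x ⁻¹' A)) ∂ν = 0
  rw [integral_sub ((integrable_const 1).indicator hAx) (integrable_const _),
    integral_indicator_one hAx]
  simp

end Bootstrap

section Combining

variable {Ω : Type*} [MeasurableSpace Ω] {P : Measure Ω} [IsProbabilityMeasure P]
  {𝒳 𝒱 : ℕ → Type*} [∀ n, MeasurableSpace (𝒳 n)] [∀ n, MeasurableSpace (𝒱 n)]
  {X : ∀ n, Ω → 𝒳 n} {V : ∀ n, ℕ → Ω → 𝒱 n} {ν : ∀ n, Measure (𝒱 n)} {M : ℕ → ℕ}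

theorem tendsto_measure_le_approxPValue_of_tendsto (hX : ∀ n, Measurable (X n))
    (hV : ∀ n i, Measurable (V n i)) (hVlaw : ∀ n i, 1 ≤ i → P.map (V n i) = ν n)
    (hVX : ∀ n, IndepFun (X n) (fun ω (i : ℕ) => V n (i + 1) ω) P)
    {A : ∀ n, Set (𝒳 n × 𝒱 n)} (hA : ∀ n, MeasurableSet (A n)) (hM : Tendsto M atTop atTop)
    (h₀ : Tendsto (fun n => P.real {ω | (X n ω, V n 1 ω) ∈ A n}) atTop (𝓝 0)) {q : ℝ}
    (hq : 0 < q) :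
    Tendsto (fun n => P {ω | q ≤ approxPValue (M n) (fun l => {ω | (X n ω, V n l ω) ∈ A n}) ω})
      atTop (𝓝 0) := by
  have hlaw : ∀ n l, 1 ≤ l →
      P.real {ω | (X n ω, V n l ω) ∈ A n} = ((P.map (X n)).prod (ν n)).real (A n) :=
    fun n l hl => by
      rw [← map_prodMk_eq_prod (hX n) (hV n) (hVlaw n) (hVX n) hl,
        map_measureReal_apply ((hX n).prodMk (hV n l)) (hA n)]
      rfl
  refine tendsto_measure_le_approxPValue hM
    (fun n l => (hA n).preimage ((hX n).prodMk (hV n l))) (fun n l hl => ?_) h₀ hq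
  exact (hlaw n l (Finset.mem_Icc.1 hl).1).trans (hlaw n 1 le_rfl).symm

theorem bddAwayFromOneInProb_approxPValue_of_tendsto_cdf [∀ n, IsProbabilityMeasure (ν n)]
    (hX : ∀ n, Measurable (X n)) (hV : ∀ n i, Measurable (V n i))
    (hVlaw : ∀ n i, 1 ≤ i → P.map (V n i) = ν n) (hViid : ∀ n, iIndepFun (fun i => V n (i + 1)) P)
    (hVX : ∀ n, IndepFun (X n) (fun ω (i : ℕ) => V n (i + 1) ω) P)
    {t : ∀ n, 𝒳 n → ℝ} (ht : ∀ n, Measurable (t n)) {G : ∀ n, 𝒳 n × 𝒱 n → ℝ}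
    (hG : ∀ n, Measurable (G n)) (hM : Tendsto M atTop atTop)
    {μ : Measure ℝ} [IsProbabilityMeasure μ] (hμ : Continuous (cdf μ))
    (hT : ∀ u, Tendsto (fun n => P.real {ω | t n (X n ω) ≤ u}) atTop (𝓝 (cdf μ u)))
    {D : ℕ → Ω → ℝ}
    (hQ : ∀ n ω u, P.real {ω' | t n (X n ω') ≤ u} - (ν n).real {v | G n (X n ω, v) ≤ u} ≤ D n ω)
    (hD : ∀ η > 0, Tendsto (fun n => P {ω | η ≤ D n ω}) atTop (𝓝 0)) :
    BddAwayFromOneInProb P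
      (fun n => approxPValue (M n) (fun l => {ω | t n (X n ω) ≤ G n (X n ω, V n l ω)})) := by
  set A : ∀ n, Set (𝒳 n × 𝒱 n) := fun n => {z | t n z.1 ≤ G n z}
  have hA : ∀ n, MeasurableSet (A n) := fun n =>
    measurableSet_le ((ht n).comp measurable_fst) (hG n)
  refine bddAwayFromOneInProb_approxPValue hM
    (fun n l => (hA n).preimage ((hX n).prodMk (hV n l)))
    (s := fun n ω => (ν n).real (Prod.mk (X n ω) ⁻¹' A n))
    (fun n => (measurable_measure_prodMk_left (hA n)).ennreal_toReal.comp (hX n))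
    (fun n ω => ⟨measureReal_nonneg, measureReal_le_one⟩)
    (fun n l hl k hk hlk => integral_indicator_sub_mul_eq_zero (hX n) (hV n l) (hV n k)
      (map_prodMk_prodMk_eq_prod (hX n) (hV n) (hVlaw n) (hViid n) (hVX n)
        (Finset.mem_Icc.1 hl).1 (Finset.mem_Icc.1 hk).1 hlk) (hA n)) ?_
  refine bddAwayFromOneInProb_of_tendsto_cdf hμ hT
    (Q := fun n ω u => (ν n).real {v | G n (X n ω, v) ≤ u}) (fun n ω u hu => ?_) hQ hD
  have hdisj : Disjoint (Prod.mk (X n ω) ⁻¹' A n) {v | G n (X n ω, v) ≤ u} :=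
    disjoint_left.2 fun v hv hv' => by
      simp only [A, mem_preimage, mem_ofPred_eq] at hv hv'
      linarith
  have hunion := measureReal_union hdisj (measurableSet_le ((hG n).comp measurable_prodMk_left)
    measurable_const) (μ := ν n)
  linarith [measureReal_le_one (μ := ν n)
    (s := Prod.mk (X n ω) ⁻¹' A n ∪ {v | G n (X n ω, v) ≤ u})]

theorem bddAwayFromOneInProb_approxPValue_of_consistent {ι : Type*} [Fintype ι] [DecidableEq ι]
    [∀ n, IsProbabilityMeasure (ν n)] (hX : ∀ n, Measurable (X n))
    (hV : ∀ n i, Measurable (V n i)) (hVlaw : ∀ n i, 1 ≤ i → P.map (V n i) = ν n)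
    (hViid : ∀ n, iIndepFun (fun i => V n (i + 1)) P)
    (hVX : ∀ n, IndepFun (X n) (fun ω (i : ℕ) => V n (i + 1) ω) P)
    {t : ∀ n, 𝒳 n → ι → ℝ} (ht : ∀ n, Measurable (t n)) {G : ∀ n, 𝒳 n × 𝒱 n → ι → ℝ}
    (hG : ∀ n, Measurable (G n)) (hM : Tendsto M atTop atTop)
    {μ : Measure (ι → ℝ)} [IsProbabilityMeasure μ]
    (hconv : TendstoInDistribution P (fun n ω => t n (X n ω)) μ)
    (hμ : Continuous fun x => μ.real (Iic x))
    (hsup : ∀ η > 0, Tendsto (fun n => P {ω | η ≤ ⨆ x : ι → ℝ,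
      |(ν n).real {v | ∀ k, G n (X n ω, v) k ≤ x k} - P.real {ω' | ∀ k, t n (X n ω') k ≤ x k}|})
      atTop (𝓝 0)) (j : ι) :
    BddAwayFromOneInProb P
      (fun n => approxPValue (M n) (fun l => {ω | t n (X n ω) j ≤ G n (X n ω, V n l ω) j})) := by
  have hj : Measurable fun y : ι → ℝ => y j := measurable_pi_apply j
  have := Measure.isProbabilityMeasure_map (μ := μ) hj.aemeasurable
  have hatom : ∀ u, μ.map (fun y => y j) {u} = 0 := fun u => by
    rw [Measure.map_apply hj (measurableSet_singleton u)]
    exact measure_eval_eq_zero_of_continuous_cdf hμ j u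
  refine bddAwayFromOneInProb_approxPValue_of_tendsto_cdf hX hV hVlaw hViid hVX
    (t := fun n x => t n x j) (G := fun n z => G n z j)
    (fun n => (measurable_pi_apply j).comp (ht n)) (fun n => (measurable_pi_apply j).comp (hG n))
    hM (continuous_cdf_of_measure_singleton hatom)
    (fun u => (hconv.comp_continuous (continuous_apply j)).tendsto_measureReal_le
      (fun n => (measurable_pi_apply j).comp ((ht n).comp (hX n))) (hatom u))
    (fun n ω u => (le_abs_self _).trans ((abs_sub_comm _ _).trans_le
      (abs_sub_measureReal_le_iSup (ν n) P (fun v => G n (X n ω, v))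
        (fun ω' => t n (X n ω')) j u))) hsup

end Combining

theorem stmt7_general
    {Ω : Type*} [MeasurableSpace Ω] (P : Measure Ω) [IsProbabilityMeasure P]
    (r : ℕ)
    (𝒳 𝒱 : ℕ → Type*) [∀ n, MeasurableSpace (𝒳 n)] [∀ n, MeasurableSpace (𝒱 n)]
    (X : ∀ n, Ω → 𝒳 n) (hXmeas : ∀ n, Measurable (X n))
    (ν : ∀ n, Measure (𝒱 n)) [∀ n, IsProbabilityMeasure (ν n)]
    (V : ∀ n, ℕ → Ω → 𝒱 n) (hVmeas : ∀ n i, Measurable (V n i))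
    (hVlaw : ∀ n i, 1 ≤ i → Measure.map (V n i) P = ν n)
    (hViid : ∀ n, iIndepFun
        (fun i => V n (i + 1)) P)
    (hVindepX : ∀ n, IndepFun (X n) (fun ω (i : ℕ) => V n (i + 1) ω) P)
    (f : ∀ n, 𝒳 n → (Fin r → ℝ)) (hf : ∀ n, Measurable (f n))
    (g : ∀ n, 𝒳 n × 𝒱 n → (Fin r → ℝ)) (hg : ∀ n, Measurable (g n))
    (Trep : ℕ → ℕ → Ω → (Fin r → ℝ))
    (hTrep : ∀ n i ω, Trep n i ω = if i = 0 then f n (X n ω) else g n (X n ω, V n i ω))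
    (M : ℕ → ℕ) (hMtop : Tendsto M atTop atTop)
    -- ψ of Stouffer type
    (w : Fin r → ℝ) (hw : ∀ j, 0 < w j)
    (φ : ℝ → ℝ)
    (hφanti : StrictAntiOn φ (Set.Ioo (0 : ℝ) 1))
    (hφbij : Set.BijOn φ (Set.Ioo (0 : ℝ) 1) Set.univ)
    -- there exists r0 ∈ {1,…,r−1} such that (a) and (b) hold
    (r0 : ℕ) (hr0r : r0 < r)
    -- (a) weak convergence of the first r0 statistics to a limit with continuous c.d.f.
    (μ0 : Measure (Fin r0 → ℝ)) [IsProbabilityMeasure μ0]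
    (hconv0 : TendstoInDistribution P
        (fun n ω => fun j : Fin r0 => Trep n 0 ω (Fin.castLE hr0r.le j)) μ0)
    (hcdf0 : Continuous fun x : Fin r0 → ℝ => (μ0 {y | ∀ j, y j ≤ x j}).toReal)
    -- (a) uniform consistency in probability of the conditional c.d.f. Q_n(X_n, ·)
    (hsup : ∀ ε : ℝ, 0 < ε →
        Tendsto (fun n => P {ω | ε ≤
            ⨆ x : Fin r0 → ℝ,
              |(ν n {v | ∀ j : Fin r0,
                    (g n (X n ω, v)) (Fin.castLE hr0r.le j) ≤ x j}).toReal
                - (P {ω' | ∀ j : Fin r0,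
                    Trep n 0 ω' (Fin.castLE hr0r.le j) ≤ x j}).toReal|})
          atTop (𝓝 0))
    -- (b) for every j with r0 ≤ j, P(T_{n,j}^{[1]} ≥ T_{n,j}) → 0
    (hb : ∀ j : Fin r, r0 ≤ (j : ℕ) →
        Tendsto (fun n => (P {ω | Trep n 0 ω j ≤ Trep n 1 ω j}).toReal) atTop (𝓝 0)) :
    ∀ C : ℝ,
      Tendsto (fun n => P {ω |
          (∑ j, w j * φ ((1 / ((M n : ℝ) + 1)) * (1 / 2 + ∑ l ∈ Finset.Icc 1 (M n),
              if Trep n 0 ω j ≤ Trep n l ω j then (1 : ℝ) else 0))) ≤ C})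
        atTop (𝓝 0) := by
  have hT0 : ∀ n ω, Trep n 0 ω = f n (X n ω) := fun n ω => by simp [hTrep]
  have hTl : ∀ n l ω, l ≠ 0 → Trep n l ω = g n (X n ω, V n l ω) := fun n l ω hl => by
    simp [hTrep, hl]
  simp only [hT0, hTl _ 1 _ one_ne_zero, ← measureReal_def] at hconv0 hsup hb
  set S : ℕ → Fin r → ℕ → Set Ω := fun n j l => {ω | f n (X n ω) j ≤ g n (X n ω, V n l ω) j}
  have hp : ∀ n j ω, 1 / ((M n : ℝ) + 1) * (1 / 2 + ∑ l ∈ Finset.Icc 1 (M n),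
      if Trep n 0 ω j ≤ Trep n l ω j then (1 : ℝ) else 0) = approxPValue (M n) (S n j) ω := by
    refine fun n j ω => congrArg (fun N => 1 / ((M n : ℝ) + 1) * (1 / 2 + N))
      (Finset.sum_congr rfl fun l hl => ?_)
    rw [hT0, hTl n l ω (Nat.one_le_iff_ne_zero.1 (Finset.mem_Icc.1 hl).1)]
    simp [S, Set.indicator_apply]
  simp only [hp]
  have halt : ∀ j : Fin r, r0 ≤ j → ∀ q > 0,
      Tendsto (fun n => P {ω | q ≤ approxPValue (M n) (S n j) ω}) atTop (𝓝 0) :=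
    fun j hj q hq => tendsto_measure_le_approxPValue_of_tendsto hXmeas hVmeas hVlaw hVindepX
      (fun n => measurableSet_le ((measurable_pi_apply j).comp ((hf n).comp measurable_fst))
        ((measurable_pi_apply j).comp (hg n))) hMtop (hb j hj) hq
  have hnull : ∀ j0 : Fin r0,
      BddAwayFromOneInProb P (fun n => approxPValue (M n) (S n (Fin.castLE hr0r.le j0))) :=
    bddAwayFromOneInProb_approxPValue_of_consistent hXmeas hVmeas hVlaw hViid hVindepX
      (t := fun n x k => f n x (Fin.castLE hr0r.le k))
      (G := fun n z k => g n z (Fin.castLE hr0r.le k))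
      (fun n => measurable_pi_lambda _ fun k => (measurable_pi_apply _).comp (hf n))
      (fun n => measurable_pi_lambda _ fun k => (measurable_pi_apply _).comp (hg n))
      hMtop hconv0 hcdf0 hsup
  refine tendstoAtTopInProb_sum_mul_comp (fun n j ω => approxPValue_mem_Ioo _ _ ω) hw hφanti
    hφbij.surjOn ⟨r0, hr0r⟩ (halt _ le_rfl) fun j => ?_
  by_cases hj : (j : ℕ) < r0
  · exact hnull ⟨j, hj⟩
  · exact bddAwayFromOneInProb_of_tendsto (halt j (not_lt.1 hj))

/-- In the combining setup with a Stouffer-type combining function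
`ψ(p) = Σ_j w_j φ(p_j)`, if there exists `r0 ∈ {1,…,r−1}` such that (a) the first `r0`
statistics `(T_{n,1},…,T_{n,r0})` converge in distribution to a vector with continuous
c.d.f. and the conditional c.d.f. `Q_n(X_n, ·)` of `(T_{n,1}^{[1]},…,T_{n,r0}^{[1]})`
given the data is uniformly consistent for the c.d.f. of `(T_{n,1},…,T_{n,r0})` in
probability, and (b) for every `j > r0`, `P(T_{n,j}^{[1]} ≥ T_{n,j}) → 0`, then
`W_{n,M_n}^{[0]}` diverges to `+∞` in probability: for every `C ∈ ℝ`,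
`P(W_{n,M_n}^{[0]} ≤ C) → 0`. -/
theorem stmt7
    {Ω : Type*} [MeasurableSpace Ω] (P : Measure Ω) [IsProbabilityMeasure P]
    (r : ℕ) (hr : 1 ≤ r)
    (𝒳 𝒱 : ℕ → Type*) [∀ n, MeasurableSpace (𝒳 n)] [∀ n, MeasurableSpace (𝒱 n)]
    (X : ∀ n, Ω → 𝒳 n) (hXmeas : ∀ n, Measurable (X n))
    (ν : ∀ n, Measure (𝒱 n)) [∀ n, IsProbabilityMeasure (ν n)]
    (V : ∀ n, ℕ → Ω → 𝒱 n) (hVmeas : ∀ n i, Measurable (V n i))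
    (hVlaw : ∀ n i, 1 ≤ i → Measure.map (V n i) P = ν n)
    (hViid : ∀ n, iIndepFun
        (fun i => V n (i + 1)) P)
    (hVindepX : ∀ n, IndepFun (X n) (fun ω (i : ℕ) => V n (i + 1) ω) P)
    (f : ∀ n, 𝒳 n → (Fin r → ℝ)) (hf : ∀ n, Measurable (f n))
    (g : ∀ n, 𝒳 n × 𝒱 n → (Fin r → ℝ)) (hg : ∀ n, Measurable (g n))
    (Trep : ℕ → ℕ → Ω → (Fin r → ℝ))
    (hTrep : ∀ n i ω, Trep n i ω = if i = 0 then f n (X n ω) else g n (X n ω, V n i ω))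
    (M : ℕ → ℕ) (hM : ∀ n, 1 ≤ M n) (hMtop : Tendsto M atTop atTop)
    -- ψ of Stouffer type
    (w : Fin r → ℝ) (hw : ∀ j, 0 < w j)
    (φ : ℝ → ℝ)
    (hφanti : StrictAntiOn φ (Set.Ioo (0 : ℝ) 1))
    (hφnonneg : ∀ x ∈ Set.Ioo (0 : ℝ) (1 / 2), 0 ≤ φ x)
    (hφbij : Set.BijOn φ (Set.Ioo (0 : ℝ) 1) Set.univ)
    -- there exists r0 ∈ {1,…,r−1} such that (a) and (b) hold
    (r0 : ℕ) (hr01 : 1 ≤ r0) (hr0r : r0 < r)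
    -- (a) weak convergence of the first r0 statistics to a limit with continuous c.d.f.
    (μ0 : Measure (Fin r0 → ℝ)) [IsProbabilityMeasure μ0]
    (hconv0 : TendstoInDistribution P
        (fun n ω => fun j : Fin r0 => Trep n 0 ω (Fin.castLE hr0r.le j)) μ0)
    (hcdf0 : Continuous fun x : Fin r0 → ℝ => (μ0 {y | ∀ j, y j ≤ x j}).toReal)
    -- (a) uniform consistency in probability of the conditional c.d.f. Q_n(X_n, ·)
    (hsup : ∀ ε : ℝ, 0 < ε →
        Tendsto (fun n => P {ω | ε ≤
            ⨆ x : Fin r0 → ℝ,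
              |(ν n {v | ∀ j : Fin r0,
                    (g n (X n ω, v)) (Fin.castLE hr0r.le j) ≤ x j}).toReal
                - (P {ω' | ∀ j : Fin r0,
                    Trep n 0 ω' (Fin.castLE hr0r.le j) ≤ x j}).toReal|})
          atTop (𝓝 0))
    -- (b) for every j with r0 ≤ j, P(T_{n,j}^{[1]} ≥ T_{n,j}) → 0
    (hb : ∀ j : Fin r, r0 ≤ (j : ℕ) →
        Tendsto (fun n => (P {ω | Trep n 0 ω j ≤ Trep n 1 ω j}).toReal) atTop (𝓝 0)) :
    ∀ C : ℝ,
      Tendsto (fun n => P {ω |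
          (∑ j, w j * φ ((1 / ((M n : ℝ) + 1)) * (1 / 2 + ∑ l ∈ Finset.Icc 1 (M n),
              if Trep n 0 ω j ≤ Trep n l ω j then (1 : ℝ) else 0))) ≤ C})
        atTop (𝓝 0) :=
  stmt7_general P r 𝒳 𝒱 X hXmeas ν V hVmeas hVlaw hViid hVindepX f hf g hg Trep hTrep M hMtop w hw φ
    hφanti hφbij r0 hr0r μ0 hconv0 hcdf0 hsup hb
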